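/- arXiv:2201.09171 — 2 statements merged into one kernel-verified Lean document; each statement's English description precedes it below -/
import Mathlib

section
/- For every positive integer t, setting v = 4(t+1) and k = 2(t+1), there exists a (v,k,t) trade (T¹, T²) of volume 2^t such that every block B ∈ T¹ ∪ T² has element sum Σ_{x∈B} x = (t+1)(4t+5); in particular both T¹ and T² are perfectly balanced (block-discrepancy zero). -/
/-- A `(v,k,t)` trade: a pair of disjoint families of `k`-element subsets (blocks)
of `{1,…,v}` of equal cardinality `≥ 1`, such that every `t`-element subset of
`{1,…,v}` is contained in the same number of blocks of each family. -/
def IsTrade (v k t : ℕ) (T1 T2 : Finset (Finset ℕ)) : Prop :=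
  (∀ B ∈ T1, B ⊆ Finset.Icc 1 v ∧ B.card = k) ∧
  (∀ B ∈ T2, B ⊆ Finset.Icc 1 v ∧ B.card = k) ∧
  Disjoint T1 T2 ∧
  T1.card = T2.card ∧
  1 ≤ T1.card ∧
  ∀ U ⊆ Finset.Icc 1 v, U.card = t →
    (T1.filter fun B => U ⊆ B).card = (T2.filter fun B => U ⊆ B).card

/-- the pair chosen in group `i` -/
def pr (i : ℕ) (b : Bool) : Finset ℕ :=
  if b then {4*i+1, 4*i+4} else {4*i+2, 4*i+3}

lemma mem_pr_iff {x i : ℕ} {b : Bool} :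
    x ∈ pr i b ↔ (b = true ∧ (x = 4*i+1 ∨ x = 4*i+4)) ∨
      (b = false ∧ (x = 4*i+2 ∨ x = 4*i+3)) := by
  cases b <;> simp [pr]

lemma div_of_mem_pr {x i : ℕ} {b : Bool} (h : x ∈ pr i b) : (x-1)/4 = i := by
  rcases mem_pr_iff.1 h with ⟨_, h | h⟩ | ⟨_, h | h⟩ <;> subst h <;> omega

lemma pr_card (i : ℕ) (b : Bool) : (pr i b).card = 2 := by
  cases b <;> simp [pr]

lemma pr_sum (i : ℕ) (b : Bool) : (pr i b).sum id = 8*i+5 := by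
  cases b <;> simp [pr] <;> omega

lemma pr_disjoint {i j : ℕ} (h : i ≠ j) (b c : Bool) : Disjoint (pr i b) (pr j c) := by
  rw [Finset.disjoint_left]
  intro x hx hx'
  have := div_of_mem_pr hx
  have := div_of_mem_pr hx'
  omega

variable {t : ℕ}

def blk (t : ℕ) (f : Fin (t+1) → Bool) : Finset ℕ :=
  Finset.univ.biUnion (fun i => pr i.val (f i))

lemma mem_blk {x : ℕ} {f : Fin (t+1) → Bool} :
    x ∈ blk t f ↔ ∃ i : Fin (t+1), x ∈ pr i.val (f i) := by
  simp [blk]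

lemma blk_card (f : Fin (t+1) → Bool) : (blk t f).card = 2*(t+1) := by
  rw [blk, Finset.card_biUnion]
  · simp [pr_card]; ring
  · intro i _ j _ hij
    exact pr_disjoint (fun h => hij (Fin.ext h)) _ _

lemma sum_range_aux (n : ℕ) : ∑ i ∈ Finset.range n, (8*i+5) = n*(4*n+1) := by
  induction n with
  | zero => simp
  | succ n ih => rw [Finset.sum_range_succ, ih]; ring

lemma blk_sum (f : Fin (t+1) → Bool) : (blk t f).sum id = (t+1) * (4*t+5) := by
  rw [blk, Finset.sum_biUnion]
  · have : ∀ i : Fin (t+1), (pr i.val (f i)).sum id = 8*i.val+5 := fun i => pr_sum _ _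
    rw [Finset.sum_congr rfl (fun i _ => this i)]
    rw [Fin.sum_univ_eq_sum_range (fun i => 8*i+5), sum_range_aux]
    ring
  · intro i _ j _ hij
    exact pr_disjoint (fun h => hij (by exact_mod_cast Fin.ext h)) _ _

lemma blk_subset (f : Fin (t+1) → Bool) : blk t f ⊆ Finset.Icc 1 (4*(t+1)) := by
  intro x hx
  obtain ⟨i, hi⟩ := mem_blk.1 hx
  have hd := div_of_mem_pr hi
  have hib : i.val ≤ t := Nat.lt_succ_iff.1 i.isLt
  rcases mem_pr_iff.1 hi with ⟨_, h | h⟩ | ⟨_, h | h⟩ <;> simp [Finset.mem_Icc] <;> omega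

lemma blk_injective : Function.Injective (blk t) := by
  intro f g h
  funext i
  have h1 : (4*i.val+1 ∈ blk t f) ↔ f i = true := by
    constructor
    · intro hx
      obtain ⟨j, hj⟩ := mem_blk.1 hx
      have := div_of_mem_pr hj
      have hji : j = i := Fin.ext (by omega)
      subst hji
      rcases mem_pr_iff.1 hj with ⟨hb, _⟩ | ⟨hb, h'⟩
      · exact hb
      · omega
    · intro hb
      exact mem_blk.2 ⟨i, by simp [pr, hb]⟩
  have h2 : (4*i.val+1 ∈ blk t g) ↔ g i = true := by
    constructor
    · intro hx
      obtain ⟨j, hj⟩ := mem_blk.1 hx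
      have := div_of_mem_pr hj
      have hji : j = i := Fin.ext (by omega)
      subst hji
      rcases mem_pr_iff.1 hj with ⟨hb, _⟩ | ⟨hb, h'⟩
      · exact hb
      · omega
    · intro hb
      exact mem_blk.2 ⟨i, by simp [pr, hb]⟩
  rw [h] at h1
  cases hfg : f i <;> cases hgg : g i <;> simp_all

/-- parity weight -/
def w (f : Fin (t+1) → Bool) : ℕ := ∑ i, (if f i = true then 1 else 0)

def flp (i0 : Fin (t+1)) (f : Fin (t+1) → Bool) : Fin (t+1) → Bool :=
  Function.update f i0 (!(f i0))

lemma flp_flp (i0 : Fin (t+1)) (f : Fin (t+1) → Bool) : flp i0 (flp i0 f) = f := by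
  funext i
  by_cases h : i = i0 <;> simp [flp, Function.update, h]

lemma w_flp_parity (i0 : Fin (t+1)) (f : Fin (t+1) → Bool) :
    Even (w (flp i0 f)) ↔ ¬ Even (w f) := by
  have key : ∀ g : Fin (t+1) → Bool, w g =
      (∑ i ∈ Finset.univ.erase i0, (if g i = true then 1 else 0)) +
      (if g i0 = true then 1 else 0) := by
    intro g
    rw [w, ← Finset.add_sum_erase _ _ (Finset.mem_univ i0)]
    ring
  have hsame : (∑ i ∈ Finset.univ.erase i0, (if flp i0 f i = true then 1 else 0)) =
      (∑ i ∈ Finset.univ.erase i0, (if f i = true then 1 else 0)) := by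
    apply Finset.sum_congr rfl
    intro i hi
    have : i ≠ i0 := (Finset.mem_erase.1 hi).1
    simp [flp, Function.update_of_ne this]
  rw [key (flp i0 f), key f, hsame]
  have : flp i0 f i0 = !(f i0) := by simp [flp]
  rw [this]
  cases f i0 <;> simp [Nat.even_iff] <;> omega

lemma blk_flp {U : Finset ℕ} {i0 : Fin (t+1)} (hU : ∀ x ∈ U, (x-1)/4 ≠ i0.val)
    {f : Fin (t+1) → Bool} (h : U ⊆ blk t f) : U ⊆ blk t (flp i0 f) := by
  intro x hx
  obtain ⟨j, hj⟩ := mem_blk.1 (h hx)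
  have hji : j ≠ i0 := by
    intro he; exact hU x hx (by rw [div_of_mem_pr hj, he])
  refine mem_blk.2 ⟨j, ?_⟩
  rwa [flp, Function.update_of_ne hji]

/-- Main counting lemma: flipping at unconstrained coordinate pairs even with odd. -/
lemma count_even_odd (i0 : Fin (t+1)) (C : (Fin (t+1) → Bool) → Prop) [DecidablePred C]
    (hC : ∀ f, C f → C (flp i0 f)) :
    (Finset.univ.filter (fun f => Even (w f) ∧ C f)).card =
    (Finset.univ.filter (fun f => ¬ Even (w f) ∧ C f)).card := by
  apply Finset.card_bij' (fun f _ => flp i0 f) (fun f _ => flp i0 f)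
  · intro f hf
    simp only [Finset.mem_filter, Finset.mem_univ, true_and] at hf ⊢
    exact ⟨by rw [w_flp_parity]; simpa using hf.1, hC f hf.2⟩
  · intro f hf
    simp only [Finset.mem_filter, Finset.mem_univ, true_and] at hf ⊢
    refine ⟨?_, hC f hf.2⟩
    rw [w_flp_parity]; simpa using hf.1
  · intro f _; exact flp_flp i0 f
  · intro f _; exact flp_flp i0 f


/-- For every positive integer `t`, with `v = 4(t+1)` and `k = 2(t+1)`, there is a
`(v,k,t)` trade of volume `2^t` in which every block of either family has element
sum `(t+1)(4t+5)`; in particular both families are perfectly balanced. -/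
theorem exists_balanced_minimal_trade (t : ℕ) (ht : 0 < t) :
    ∃ T1 T2 : Finset (Finset ℕ),
      IsTrade (4*(t+1)) (2*(t+1)) t T1 T2 ∧ T1.card = 2 ^ t ∧
      ∀ B ∈ T1 ∪ T2, B.sum id = (t+1) * (4*t+5) := by
  classical
  set E : Finset (Fin (t+1) → Bool) := Finset.univ.filter (fun f => Even (w f)) with hE
  set O : Finset (Fin (t+1) → Bool) := Finset.univ.filter (fun f => ¬ Even (w f)) with hO
  have hEO : E.card = O.card := by
    have h := count_even_odd (t := t) 0 (fun _ => True) (fun _ _ => trivial)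
    simpa [hE, hO] using h
  have htot : E.card + O.card = 2^(t+1) := by
    rw [hE, hO, Finset.card_filter_add_card_filter_not, Finset.card_univ]
    simp [Fintype.card_fun]
  have hEcard : E.card = 2^t := by
    have h2 : 2^(t+1) = 2 * 2^t := by ring
    omega
  have hT1card : (E.image (blk t)).card = 2^t := by
    rw [Finset.card_image_of_injective _ blk_injective, hEcard]
  refine ⟨E.image (blk t), O.image (blk t), ?_, hT1card, ?_⟩
  · refine ⟨?_, ?_, ?_, ?_, ?_, ?_⟩
    · intro B hB
      obtain ⟨f, _, rfl⟩ := Finset.mem_image.1 hB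
      exact ⟨blk_subset f, blk_card f⟩
    · intro B hB
      obtain ⟨f, _, rfl⟩ := Finset.mem_image.1 hB
      exact ⟨blk_subset f, blk_card f⟩
    · rw [Finset.disjoint_left]
      intro B hB1 hB2
      obtain ⟨f, hf, rfl⟩ := Finset.mem_image.1 hB1
      obtain ⟨g, hg, heq⟩ := Finset.mem_image.1 hB2
      have : g = f := blk_injective heq
      subst this
      rw [hE, Finset.mem_filter] at hf
      rw [hO, Finset.mem_filter] at hg
      exact hg.2 hf.2
    · rw [Finset.card_image_of_injective _ blk_injective,
        Finset.card_image_of_injective _ blk_injective, hEO]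
    · rw [hT1card]
      exact Nat.one_le_two_pow
    · intro U hU hUcard
      -- find an unconstrained group
      have hex : ∃ i0 : Fin (t+1), ∀ x ∈ U, (x-1)/4 ≠ i0.val := by
        by_contra hcon
        push_neg at hcon
        have hsub : Finset.range (t+1) ⊆ U.image (fun x => (x-1)/4) := by
          intro i hi
          obtain ⟨x, hx, he⟩ := hcon ⟨i, Finset.mem_range.1 hi⟩
          exact Finset.mem_image.2 ⟨x, hx, he⟩
        have h1 := Finset.card_le_card hsub
        have h2 := Finset.card_image_le (s := U) (f := fun x => (x-1)/4)
        rw [Finset.card_range] at h1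
        omega
      obtain ⟨i0, hi0⟩ := hex
      have himg : ∀ S : Finset (Fin (t+1) → Bool),
          ((S.image (blk t)).filter (fun B => U ⊆ B)).card =
          (S.filter (fun f => U ⊆ blk t f)).card := by
        intro S
        rw [← Finset.card_image_of_injective (S.filter (fun f => U ⊆ blk t f)) blk_injective]
        congr 1
        ext B
        simp only [Finset.mem_filter, Finset.mem_image]
        constructor
        · rintro ⟨⟨f, hf, rfl⟩, h2⟩
          exact ⟨f, ⟨hf, h2⟩, rfl⟩
        · rintro ⟨f, ⟨hf, h2⟩, rfl⟩
          exact ⟨⟨f, hf, rfl⟩, h2⟩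
      rw [himg E, himg O, hE, hO, Finset.filter_filter, Finset.filter_filter]
      exact count_even_odd i0 (fun f => U ⊆ blk t f) (fun f hf => blk_flp hi0 hf)
  · intro B hB
    rcases Finset.mem_union.1 hB with hB | hB <;>
      obtain ⟨f, _, rfl⟩ := Finset.mem_image.1 hB <;> exact blk_sum f
end

section
/- Let t be a positive integer with t + 1 ≥ 3, let v = 4(t+1), m = ⌊(t+1)/5⌋, and m' = v − 20m (so m' ∈ {0, 4, 8, 12, 16}). Then there exists a balanced companion family on {1,…,v} whose worst-case total set discrepancy under magnitude-2 swaps is at most 26m + Δ, where Δ = −4, 4, 8, 12, 18 according as m' = 0, 4, 8, 12, 16, respectively. -/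
/-- An (indexed) balanced companion family on `{1,…,4(t+1)}`: pairwise disjoint
2-element subsets `S 1, …, S (2t+2)` of `{1,…,4(t+1)}` whose union is all of
`{1,…,4(t+1)}`, such that for each `i = 1,…,t+1` the companion sets `S (2i-1)`
and `S (2i)` have equal element sums. -/
def IsBalancedCompanionFamily (t : ℕ) (S : ℕ → Finset ℕ) : Prop :=
  (∀ i ∈ Finset.Icc 1 (2*t+2), S i ⊆ Finset.Icc 1 (4*(t+1)) ∧ (S i).card = 2) ∧
  (∀ i ∈ Finset.Icc 1 (2*t+2), ∀ j ∈ Finset.Icc 1 (2*t+2),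
    i ≠ j → Disjoint (S i) (S j)) ∧
  (Finset.Icc 1 (2*t+2)).biUnion S = Finset.Icc 1 (4*(t+1)) ∧
  ∀ i ∈ Finset.Icc 1 (t+1), (S (2*i-1)).sum id = (S (2*i)).sum id

/-- A collection of popularity swaps of magnitude `p` on `{1,…,v}`: a permutation
`π` of `{1,…,v}` with `π ∘ π = id` and `|π i − i| ≤ p` for every `i ∈ {1,…,v}`. -/
def IsSwapCollection (v p : ℕ) (π : ℕ → ℕ) : Prop :=
  (∀ i ∈ Finset.Icc 1 v, π i ∈ Finset.Icc 1 v) ∧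
  (∀ i ∈ Finset.Icc 1 v, π (π i) = i) ∧
  (∀ i ∈ Finset.Icc 1 v, |(π i : ℤ) - (i : ℤ)| ≤ (p : ℤ))

/-- The total set discrepancy of the family `S` under the swap collection `π`:
`∑_{i=1}^{t+1} |∑_{x ∈ S (2i-1)} π x − ∑_{x ∈ S (2i)} π x|`. -/
def totalSetDiscrepancy (t : ℕ) (S : ℕ → Finset ℕ) (π : ℕ → ℕ) : ℤ :=
  ∑ i ∈ Finset.Icc 1 (t+1),
    |((S (2*i-1)).sum fun x => (π x : ℤ)) - ((S (2*i)).sum fun x => (π x : ℤ))|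

/-!
Write `t + 1 = 5m + r` and label the positions so that the label classes are the companion sets:
`m` blocks of `20` positions, each carrying the same pattern of five companion pairs, then a tail
of `4r` positions.
Given `π`, give every companion pair the sign of its discrepancy; the total discrepancy becomes
`∑ x, g x * (π x - x)`, where `g x = ±1` is the sign of the set containing `x`. As `π` is an
involution moving no point by more than `2`, this sum is carried by the `2`-cycles `{x, x + δ}`
(`δ ≤ 2`), and each contributes `δ * (g x - g (x + δ)) ≤ 2 [x charged] + 2 [x + δ charged]` for
the local rule `ChargedPattern`. A finite check shows that a block has at most `13` charged
positions (one less at each end of the layout) and bounds the charges of the tail.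
-/

open Finset

theorem Finset.sum_le_sum_of_involution {ι M : Type*} [AddCommGroup M] [LinearOrder M]
    [IsOrderedAddMonoid M] {s : Finset ι} {π : ι → ι} (hπ : ∀ x ∈ s, π x ∈ s)
    (hππ : ∀ x ∈ s, π (π x) = x) {f g : ι → M} (h : ∀ x ∈ s, f x + f (π x) ≤ g x + g (π x)) :
    ∑ x ∈ s, f x ≤ ∑ x ∈ s, g x := by
  have reindex (u : ι → M) : ∑ x ∈ s, u (π x) = ∑ x ∈ s, u x :=
    sum_nbij' π π hπ hπ hππ hππ fun _ _ => rfl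
  refine le_of_nsmul_le_nsmul_right two_ne_zero ?_
  calc 2 • ∑ x ∈ s, f x = ∑ x ∈ s, (f x + f (π x)) := by rw [sum_add_distrib, reindex, two_nsmul]
    _ ≤ ∑ x ∈ s, (g x + g (π x)) := sum_le_sum h
    _ = 2 • ∑ x ∈ s, g x := by rw [sum_add_distrib, reindex, two_nsmul]

/-- A position of sign `c`, with `a, b` to its left and `d, e` to its right, is charged if it is
an end of a long descent `(+, ·, -)`, or the left end of a short descent `(+, -)` whose right end
is not already the end of a long descent. -/
def ChargedPattern (a b c d e : SignType) : Prop :=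
  (c = 1 ∧ e = -1) ∨ (a = 1 ∧ c = -1) ∨ (b ≠ 1 ∧ c = 1 ∧ d = -1)

instance (a b c d e : SignType) : Decidable (ChargedPattern a b c d e) := by
  unfold ChargedPattern; infer_instance

def Charged (g : ℕ → SignType) (x : ℕ) : Prop :=
  ChargedPattern (g (x - 2)) (g (x - 1)) (g x) (g (x + 1)) (g (x + 2))

instance (g : ℕ → SignType) : DecidablePred (Charged g) := fun _ => by
  unfold Charged; infer_instance

def charge (g : ℕ → SignType) (x : ℕ) : ℤ := if Charged g x then 2 else 0

theorem swap_one_gain_le_chargedPattern : ∀ a b c d e f : SignType, c ≠ 0 → d ≠ 0 →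
    (c : ℤ) - d ≤ (if ChargedPattern a b c d e then 2 else 0) +
      (if ChargedPattern b c d e f then 2 else 0) := by
  decide

theorem swap_two_gain_le_chargedPattern : ∀ a b c d e f h : SignType, c ≠ 0 → e ≠ 0 →
    ((c : ℤ) - e) * 2 ≤ (if ChargedPattern a b c d e then 2 else 0) +
      (if ChargedPattern c d e f h then 2 else 0) := by
  decide

theorem swap_gain_le_charge (g : ℕ → SignType) {x y : ℕ} (hx : g x ≠ 0) (hy : g y ≠ 0)
    (hxy : |(y : ℤ) - x| ≤ 2) : ((g x : ℤ) - g y) * ((y : ℤ) - x) ≤ charge g x + charge g y := by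
  wlog hle : x ≤ y generalizing x y
  · have := this hy hx (by rwa [abs_sub_comm]) (by omega)
    linarith
  obtain ⟨δ, rfl⟩ := Nat.exists_eq_add_of_le hle
  have hδ : δ ≤ 2 := by rw [abs_le] at hxy; push_cast at hxy; omega
  interval_cases δ
  · simp [charge]; split_ifs <;> norm_num
  · have := swap_one_gain_le_chargedPattern (g (x - 2)) (g (x - 1)) _ _ (g (x + 2)) (g (x + 3))
      hx hy
    simp only [charge, Charged, show x + 1 - 2 = x - 1 by omega, Nat.add_sub_cancel, add_assoc]
    push_cast
    linarith
  · have := swap_two_gain_le_chargedPattern (g (x - 2)) (g (x - 1)) _ (g (x + 1)) _ (g (x + 3))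
      (g (x + 4)) hx hy
    simp only [charge, Charged, show x + 2 - 1 = x + 1 by omega, Nat.add_sub_cancel, add_assoc]
    push_cast
    linarith

theorem sum_sign_mul_displacement_le {v : ℕ} {g : ℕ → SignType} (hg : ∀ x ∈ Icc 1 v, g x ≠ 0)
    {π : ℕ → ℕ} (hπ : IsSwapCollection v 2 π) :
    ∑ x ∈ Icc 1 v, (g x : ℤ) * ((π x : ℤ) - x) ≤ 2 * #{x ∈ Icc 1 v | Charged g x} := by
  obtain ⟨hmaps, hinv, hdisp⟩ := hπ
  calc ∑ x ∈ Icc 1 v, (g x : ℤ) * ((π x : ℤ) - x) ≤ ∑ x ∈ Icc 1 v, charge g x := by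
        refine sum_le_sum_of_involution hmaps hinv fun x hx => ?_
        rw [hinv x hx]
        have := swap_gain_le_charge g (hg x hx) (hg _ (hmaps x hx)) (by exact_mod_cast hdisp x hx)
        linarith
    _ = 2 * #{x ∈ Icc 1 v | Charged g x} := by
        simp [charge, sum_ite, mul_comm]

def labelClass (v : ℕ) (lab : ℕ → ℕ) (k : ℕ) : Finset ℕ := {x ∈ Icc 1 v | lab x = k}

theorem isBalancedCompanionFamily_labelClass {t : ℕ} {lab : ℕ → ℕ}
    (hlab : ∀ x ∈ Icc 1 (4 * (t + 1)), lab x ∈ Icc 1 (2 * t + 2))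
    (hcard : ∀ k ∈ Icc 1 (2 * t + 2), #(labelClass (4 * (t + 1)) lab k) = 2)
    (hsum : ∀ i ∈ Icc 1 (t + 1), ∑ x ∈ labelClass (4 * (t + 1)) lab (2 * i - 1), x =
      ∑ x ∈ labelClass (4 * (t + 1)) lab (2 * i), x) :
    IsBalancedCompanionFamily t (labelClass (4 * (t + 1)) lab) := by
  refine ⟨fun k hk => ⟨filter_subset _ _, hcard k hk⟩, fun i _ j _ hij => ?_, ?_, hsum⟩
  · exact disjoint_filter.2 fun x _ hi hj => hij (hi.symm.trans hj)
  · ext x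
    simp only [mem_biUnion, labelClass, mem_filter]
    exact ⟨fun ⟨_, _, hx, _⟩ => hx, fun hx => ⟨lab x, hlab x hx, hx, rfl⟩⟩

/-- Labels `2i - 1` and `2i` form the companion pair `i`; `ε i` says which of the two is counted
positively. -/
def labelSign (ε : ℕ → Bool) (k : ℕ) : SignType :=
  if ε ((k + 1) / 2) = decide (k % 2 = 1) then 1 else -1

def positionSign (v : ℕ) (lab : ℕ → ℕ) (ε : ℕ → Bool) (x : ℕ) : SignType :=
  if x ∈ Icc 1 v then labelSign ε (lab x) else 0

theorem labelSign_two_mul_sub_one (ε : ℕ → Bool) {i : ℕ} (hi : 1 ≤ i) :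
    labelSign ε (2 * i - 1) = if ε i then 1 else -1 := by
  rw [labelSign, show (2 * i - 1 + 1) / 2 = i by omega, show (2 * i - 1) % 2 = 1 by omega]
  cases ε i <;> rfl

theorem labelSign_two_mul (ε : ℕ → Bool) (i : ℕ) :
    labelSign ε (2 * i) = -if ε i then 1 else -1 := by
  rw [labelSign, show (2 * i + 1) / 2 = i by omega, show 2 * i % 2 = 0 by omega]
  cases ε i <;> rfl

theorem positionSign_ne_zero {v : ℕ} (lab : ℕ → ℕ) (ε : ℕ → Bool) {x : ℕ} (hx : x ∈ Icc 1 v) :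
    positionSign v lab ε x ≠ 0 := by
  rw [positionSign, if_pos hx, labelSign]
  split_ifs <;> decide

theorem sum_Icc_two_mul_eq_sum_pairs (n : ℕ) (f : ℕ → ℤ) :
    ∑ k ∈ Icc 1 (2 * n), f k = ∑ i ∈ Icc 1 n, (f (2 * i - 1) + f (2 * i)) := by
  induction n with
  | zero => simp
  | succ n ih =>
    rw [show 2 * (n + 1) = 2 * n + 1 + 1 by ring, sum_Icc_succ_top (by omega),
      sum_Icc_succ_top (by omega), ih, sum_Icc_succ_top (by omega : 1 ≤ n + 1),
      show 2 * (n + 1) - 1 = 2 * n + 1 by omega, show 2 * (n + 1) = 2 * n + 1 + 1 by ring]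
    ring

theorem exists_totalSetDiscrepancy_labelClass_eq {t : ℕ} {lab : ℕ → ℕ}
    (hlab : ∀ x ∈ Icc 1 (4 * (t + 1)), lab x ∈ Icc 1 (2 * t + 2))
    (hsum : ∀ i ∈ Icc 1 (t + 1), ∑ x ∈ labelClass (4 * (t + 1)) lab (2 * i - 1), x =
      ∑ x ∈ labelClass (4 * (t + 1)) lab (2 * i), x) (π : ℕ → ℕ) :
    ∃ ε : ℕ → Bool, totalSetDiscrepancy t (labelClass (4 * (t + 1)) lab) π =
      ∑ x ∈ Icc 1 (4 * (t + 1)), (positionSign (4 * (t + 1)) lab ε x : ℤ) * ((π x : ℤ) - x) := by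
  set S := labelClass (4 * (t + 1)) lab
  set d : ℕ → ℤ := fun x => (π x : ℤ) - x
  set D : ℕ → ℤ := fun i => ∑ x ∈ S (2 * i - 1), d x - ∑ x ∈ S (2 * i), d x
  set ε : ℕ → Bool := fun i => decide (0 ≤ D i)
  have hterm : ∀ i ∈ Icc 1 (t + 1),
      |((S (2 * i - 1)).sum fun x => (π x : ℤ)) - ((S (2 * i)).sum fun x => (π x : ℤ))| =
        ∑ x ∈ S (2 * i - 1), (labelSign ε (2 * i - 1) : ℤ) * d x +
          ∑ x ∈ S (2 * i), (labelSign ε (2 * i) : ℤ) * d x := by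
    intro i hi
    have hpos : ∑ x ∈ S (2 * i - 1), (x : ℤ) = ∑ x ∈ S (2 * i), (x : ℤ) := by
      rw [← Nat.cast_sum, ← Nat.cast_sum, hsum i hi]
    have hD : ((S (2 * i - 1)).sum fun x => (π x : ℤ)) - ((S (2 * i)).sum fun x => (π x : ℤ)) =
        D i := by
      simp only [D, d, sum_sub_distrib]
      linarith
    rw [hD, ← mul_sum, ← mul_sum, labelSign_two_mul, labelSign_two_mul_sub_one ε (mem_Icc.1 hi).1]
    rcases le_or_gt 0 (D i) with h | h
    · rw [show ε i = true from decide_eq_true h, abs_of_nonneg h]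
      simp [D]; ring
    · rw [show ε i = false from decide_eq_false h.not_ge, abs_of_neg h]
      simp [D]; ring
  refine ⟨ε, ?_⟩
  rw [totalSetDiscrepancy, sum_congr rfl hterm, ← sum_Icc_two_mul_eq_sum_pairs (t + 1)
    (fun k => ∑ x ∈ S k, (labelSign ε k : ℤ) * d x), show 2 * (t + 1) = 2 * t + 2 by ring,
    ← sum_fiberwise_of_maps_to hlab]
  refine sum_congr rfl fun k _ => sum_congr rfl fun x hx => ?_
  obtain ⟨hxv, rfl⟩ := mem_filter.1 hx
  simp [positionSign, hxv, d]

structure IsCompanionWord (w : List ℕ) (n : ℕ) : Prop where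
  length_eq : w.length = 4 * n
  getD_mem : ∀ p < w.length, w.getD p 0 ∈ Icc 1 (2 * n)
  card_eq : ∀ j ∈ Icc 1 (2 * n), #{p ∈ range w.length | w.getD p 0 = j} = 2
  sum_eq : ∀ i ∈ Icc 1 n, ∑ p ∈ range w.length with w.getD p 0 = 2 * i - 1, p =
    ∑ p ∈ range w.length with w.getD p 0 = 2 * i, p

def blockWord : List ℕ := [1, 2, 3, 2, 1, 4, 4, 5, 6, 3, 7, 6, 5, 8, 8, 9, 10, 7, 10, 9]

def tailWord : ℕ → List ℕ
  | 1 => [1, 2, 2, 1]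
  | 2 => [1, 3, 4, 2, 2, 4, 3, 1]
  | 3 => [1, 2, 3, 2, 1, 4, 4, 5, 6, 3, 6, 5]
  | 4 => [1, 2, 3, 2, 1, 5, 4, 7, 8, 6, 4, 6, 8, 7, 3, 5]
  | _ => []

theorem isCompanionWord_blockWord : IsCompanionWord blockWord 5 :=
  ⟨by decide, by decide, by decide, by decide⟩

theorem isCompanionWord_tailWord {r : ℕ} (hr : r < 5) : IsCompanionWord (tailWord r) r := by
  interval_cases r <;> exact ⟨by decide, by decide, by decide, by decide⟩

def segmentWord (m r q : ℕ) : List ℕ := if q < m then blockWord else tailWord r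

/-- The positions `20q + 1, 20q + 2, …` form segment `q`: the blocks `q < m`, then the tail
`q = m`. -/
def layoutLabel (m r x : ℕ) : ℕ :=
  10 * ((x - 1) / 20) + (segmentWord m r ((x - 1) / 20)).getD ((x - 1) % 20) 0

theorem isCompanionWord_segmentWord {m r q : ℕ} (hr : r < 5) :
    IsCompanionWord (segmentWord m r q) (if q < m then 5 else r) := by
  unfold segmentWord
  split_ifs
  exacts [isCompanionWord_blockWord, isCompanionWord_tailWord hr]

theorem segmentWord_length {m r q : ℕ} (hr : r < 5) :
    (segmentWord m r q).length = if q < m then 20 else 4 * r := by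
  rw [(isCompanionWord_segmentWord hr).length_eq]; split_ifs <;> rfl

theorem segmentWord_getD_mem {m r q p : ℕ} (hr : r < 5)
    (hp : p < (segmentWord m r q).length) : (segmentWord m r q).getD p 0 ∈ Icc 1 10 := by
  have h := (isCompanionWord_segmentWord hr).getD_mem p hp
  rw [mem_Icc] at h ⊢
  split_ifs at h <;> omega

theorem layoutLabel_eq {m r q p : ℕ} (hp : p < 20) :
    layoutLabel m r (20 * q + p + 1) = 10 * q + (segmentWord m r q).getD p 0 := by
  rw [layoutLabel, show (20 * q + p + 1 - 1) / 20 = q by omega,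
    show (20 * q + p + 1 - 1) % 20 = p by omega]

theorem segmentWord_length_le {m r q : ℕ} (hr : r < 5) : (segmentWord m r q).length ≤ 20 := by
  rw [segmentWord_length hr]; split_ifs <;> omega

theorem exists_segment_of_mem {m r x : ℕ} (hr : r < 5) (hx : x ∈ Icc 1 (20 * m + 4 * r)) :
    ∃ q p, q ≤ m ∧ p < (segmentWord m r q).length ∧ x = 20 * q + p + 1 := by
  rw [mem_Icc] at hx
  refine ⟨(x - 1) / 20, (x - 1) % 20, by omega, ?_, by omega⟩
  rw [segmentWord_length hr]; split_ifs <;> omega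

theorem labelClass_layout {m r q j : ℕ} (hr : r < 5) (hq : q ≤ m) (hj : j ∈ Icc 1 10) :
    labelClass (20 * m + 4 * r) (layoutLabel m r) (10 * q + j) =
      {p ∈ range (segmentWord m r q).length | (segmentWord m r q).getD p 0 = j}.map
        (addLeftEmbedding (20 * q + 1)) := by
  rw [mem_Icc] at hj
  ext x
  simp only [labelClass, mem_filter, mem_map, mem_range, addLeftEmbedding_apply, mem_Icc]
  constructor
  · rintro ⟨hx, hlab⟩
    obtain ⟨Q, P, hQ, hP, rfl⟩ := exists_segment_of_mem hr (mem_Icc.2 hx)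
    have hmem := mem_Icc.1 (segmentWord_getD_mem hr hP)
    rw [layoutLabel_eq (hP.trans_le (segmentWord_length_le hr))] at hlab
    obtain rfl : Q = q := by omega
    exact ⟨P, ⟨hP, by omega⟩, by ring⟩
  · rintro ⟨p, ⟨hp, hpj⟩, rfl⟩
    have hlen := segmentWord_length (m := m) (q := q) hr
    have hp20 : p < 20 := by split_ifs at hlen <;> omega
    refine ⟨⟨by omega, by split_ifs at hlen <;> omega⟩, ?_⟩
    rw [show 20 * q + 1 + p = 20 * q + p + 1 by ring, layoutLabel_eq hp20, hpj]

theorem layoutLabel_mem {m r x : ℕ} (hr : r < 5) (hx : x ∈ Icc 1 (20 * m + 4 * r)) :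
    layoutLabel m r x ∈ Icc 1 (10 * m + 2 * r) := by
  obtain ⟨q, p, hq, hp, rfl⟩ := exists_segment_of_mem hr hx
  have hmem := mem_Icc.1 ((isCompanionWord_segmentWord hr).getD_mem p hp)
  rw [layoutLabel_eq (hp.trans_le (segmentWord_length_le hr)), mem_Icc]
  split_ifs at hmem <;> omega

theorem card_labelClass_layout {m r k : ℕ} (hr : r < 5) (hk : k ∈ Icc 1 (10 * m + 2 * r)) :
    #(labelClass (20 * m + 4 * r) (layoutLabel m r) k) = 2 := by
  rw [mem_Icc] at hk
  obtain ⟨q, j, hj, rfl⟩ : ∃ q j, j ∈ Icc 1 10 ∧ k = 10 * q + j :=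
    ⟨(k - 1) / 10, (k - 1) % 10 + 1, mem_Icc.2 ⟨by omega, by omega⟩, by omega⟩
  rw [labelClass_layout hr (by omega) hj, card_map]
  refine (isCompanionWord_segmentWord hr).card_eq j (mem_Icc.2 ⟨(mem_Icc.1 hj).1, ?_⟩)
  have := (mem_Icc.1 hj).2
  split_ifs <;> omega

theorem sum_labelClass_layout {m r i : ℕ} (hr : r < 5) (hi : i ∈ Icc 1 (5 * m + r)) :
    ∑ x ∈ labelClass (20 * m + 4 * r) (layoutLabel m r) (2 * i - 1), x =
      ∑ x ∈ labelClass (20 * m + 4 * r) (layoutLabel m r) (2 * i), x := by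
  rw [mem_Icc] at hi
  obtain ⟨q, i', hi', rfl⟩ : ∃ q i', i' ∈ Icc 1 5 ∧ i = 5 * q + i' :=
    ⟨(i - 1) / 5, (i - 1) % 5 + 1, mem_Icc.2 ⟨by omega, by omega⟩, by omega⟩
  rw [mem_Icc] at hi'
  have hw := isCompanionWord_segmentWord (m := m) (q := q) hr
  have hi'n : i' ∈ Icc 1 (if q < m then 5 else r) := by
    rw [mem_Icc]; split_ifs <;> omega
  rw [show 2 * (5 * q + i') - 1 = 10 * q + (2 * i' - 1) by omega,
    show 2 * (5 * q + i') = 10 * q + 2 * i' by ring,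
    labelClass_layout hr (by omega) (mem_Icc.2 ⟨by omega, by omega⟩),
    labelClass_layout hr (by omega) (mem_Icc.2 ⟨by omega, by omega⟩), sum_map, sum_map]
  have shift (s : Finset ℕ) :
      ∑ p ∈ s, addLeftEmbedding (20 * q + 1) p = #s * (20 * q + 1) + ∑ p ∈ s, p := by
    simp only [addLeftEmbedding_apply]; rw [sum_add_distrib, sum_const, smul_eq_mul]
  rw [shift, shift, hw.sum_eq i' hi'n, hw.card_eq _ (by rw [mem_Icc] at hi'n ⊢; omega),
    hw.card_eq _ (by rw [mem_Icc] at hi'n ⊢; omega)]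

def chargesOn (g : ℕ → SignType) (a n : ℕ) : ℕ := #{p ∈ range n | Charged g (a + p + 1)}

theorem chargesOn_zero_left (g : ℕ → SignType) (v : ℕ) :
    chargesOn g 0 v = #{x ∈ Icc 1 v | Charged g x} := by
  refine card_nbij' (· + 1) (· - 1) (fun p hp => ?_) (fun x hx => ?_) (fun p _ => rfl)
    (fun x hx => ?_)
  · simp only [coe_filter, Set.mem_ofPred_eq, mem_range, mem_Icc, zero_add] at hp ⊢
    exact ⟨⟨by omega, by omega⟩, hp.2⟩
  · simp only [coe_filter, Set.mem_ofPred_eq, mem_range, mem_Icc] at hx ⊢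
    exact ⟨by omega, by rw [zero_add, Nat.sub_add_cancel hx.1.1]; exact hx.2⟩
  · simp only [coe_filter, Set.mem_ofPred_eq, mem_Icc] at hx
    exact Nat.sub_add_cancel hx.1.1

theorem chargesOn_add (g : ℕ → SignType) (a n₁ n₂ : ℕ) :
    chargesOn g a (n₁ + n₂) = chargesOn g a n₁ + chargesOn g (a + n₁) n₂ := by
  simp only [chargesOn, card_filter, sum_range_add, add_assoc]

theorem chargesOn_twenty_mul (g : ℕ → SignType) (m : ℕ) :
    chargesOn g 0 (20 * m) = ∑ q ∈ range m, chargesOn g (20 * q) 20 := by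
  induction m with
  | zero => simp [chargesOn]
  | succ m ih => rw [mul_add_one, chargesOn_add, ih, sum_range_succ, zero_add]

theorem chargesOn_congr {g h : ℕ → SignType} {a n : ℕ} (hgh : ∀ j < n + 4, g (a + j - 1) = h j) :
    chargesOn g a n = chargesOn h 1 n := by
  refine congrArg card (filter_congr fun p hp => iff_of_eq ?_)
  have hp := mem_range.1 hp
  unfold Charged
  congr 1 <;> exact (congrArg g (by omega)).trans (hgh _ (by omega))

def localSigns (s₁ s₂ s₃ s₄ s₅ : Bool) (i : ℕ) : Bool := [s₁, s₂, s₃, s₄, s₅].getD (i - 1) false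

/-- The signs of a segment with word `w`, at the indices `2, …, |w| + 1`, preceded by `-c, c`
(which is how every block ends) and followed by `d, e`. -/
def segmentPattern (c : SignType) (w : List ℕ) (ε : ℕ → Bool) (d e : SignType) (j : ℕ) :
    SignType :=
  if j = 0 then -c else if j = 1 then c else if j < w.length + 2 then labelSign ε (w.getD (j - 2) 0)
  else if j = w.length + 2 then d else e

theorem chargesOn_segmentPattern_blockWord_le : ∀ s₁ s₂ s₃ s₄ s₅ : Bool, ∀ c d e : SignType,
    chargesOn (segmentPattern c blockWord (localSigns s₁ s₂ s₃ s₄ s₅) d e) 1 20 +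
      (if c = 0 then 1 else 0) + (if d = 0 ∧ e = 0 then 1 else 0) ≤ 13 := by
  decide +kernel

def tailCharges : ℕ → ℕ
  | 1 => 3
  | 2 => 5
  | 3 => 7
  | 4 => 10
  | _ => 0

theorem chargesOn_segmentPattern_tailWord_le : ∀ r ∈ Icc 1 4, ∀ s₁ s₂ s₃ s₄ s₅ : Bool,
    ∀ c : SignType, chargesOn (segmentPattern c (tailWord r) (localSigns s₁ s₂ s₃ s₄ s₅) 0 0) 1
      (4 * r) + (if c = 0 then 1 else 0) ≤ tailCharges r := by
  decide +kernel

def segmentSigns (ε : ℕ → Bool) (q : ℕ) : ℕ → Bool :=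
  localSigns (ε (5 * q + 1)) (ε (5 * q + 2)) (ε (5 * q + 3)) (ε (5 * q + 4)) (ε (5 * q + 5))

theorem labelSign_ten_mul_add (ε : ℕ → Bool) (q : ℕ) {k : ℕ} (hk : k ∈ Icc 1 10) :
    labelSign ε (10 * q + k) = labelSign (segmentSigns ε q) k := by
  obtain ⟨hk₁, hk₂⟩ := mem_Icc.1 hk
  unfold labelSign
  rw [show (10 * q + k + 1) / 2 = 5 * q + (k + 1) / 2 by omega,
    show (10 * q + k) % 2 = k % 2 by omega]
  interval_cases k <;> rfl

theorem ite_one_zero_mono {P Q : Prop} [Decidable P] [Decidable Q] (h : P → Q) :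
    (if P then 1 else 0 : ℕ) ≤ if Q then 1 else 0 := by
  split_ifs <;> simp_all

section Layout

variable {m r : ℕ} (ε : ℕ → Bool)

local notation "g" => positionSign (20 * m + 4 * r) (layoutLabel m r) ε

theorem positionSign_layout {q p : ℕ} (hr : r < 5) (hq : q ≤ m)
    (hp : p < (segmentWord m r q).length) :
    g (20 * q + p + 1) = labelSign ε (10 * q + (segmentWord m r q).getD p 0) := by
  have hlen := segmentWord_length (m := m) (q := q) hr
  rw [positionSign, if_pos (mem_Icc.2 ⟨by omega, by split_ifs at hlen <;> omega⟩),
    layoutLabel_eq (by split_ifs at hlen <;> omega)]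

theorem positionSign_of_lt_one {x : ℕ} (hx : x < 1) : g x = 0 := by
  rw [positionSign, if_neg (by rw [mem_Icc]; omega)]

theorem positionSign_of_gt {x : ℕ} (hx : 20 * m + 4 * r < x) : g x = 0 := by
  rw [positionSign, if_neg (by rw [mem_Icc]; omega)]

theorem positionSign_twenty_mul_sub_one {q : ℕ} (hr : r < 5) (hq : q ≤ m) :
    g (20 * q - 1) = -g (20 * q) := by
  rcases q with _ | q
  · norm_num only
    rw [positionSign_of_lt_one ε one_pos, neg_zero]
  have hw : segmentWord m r q = blockWord := if_pos (by omega)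
  rw [show 20 * (q + 1) - 1 = 20 * q + 18 + 1 by omega, show 20 * (q + 1) = 20 * q + 19 + 1 by ring,
    positionSign_layout ε hr (by omega) (by rw [hw]; decide),
    positionSign_layout ε hr (by omega) (by rw [hw]; decide), hw,
    show blockWord.getD 18 0 = 10 from rfl, show blockWord.getD 19 0 = 9 from rfl,
    show 10 * q + 10 = 2 * (5 * q + 5) by ring, show 10 * q + 9 = 2 * (5 * q + 5) - 1 by omega,
    labelSign_two_mul, labelSign_two_mul_sub_one ε (by omega)]

theorem positionSign_eq_segmentPattern {q j : ℕ} (hr : r < 5) (hq : q ≤ m)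
    (hj : j < (segmentWord m r q).length + 4) :
    g (20 * q + j - 1) = segmentPattern (g (20 * q)) (segmentWord m r q) (segmentSigns ε q)
      (g (20 * q + (segmentWord m r q).length + 1))
      (g (20 * q + (segmentWord m r q).length + 2)) j := by
  unfold segmentPattern
  split_ifs with h₀ h₁ h₂ h₃
  · rw [h₀, add_zero, positionSign_twenty_mul_sub_one ε hr hq]
  · rw [h₁, Nat.add_sub_cancel]
  · rw [show 20 * q + j - 1 = 20 * q + (j - 2) + 1 by omega, positionSign_layout ε hr hq (by omega),
      labelSign_ten_mul_add ε q (segmentWord_getD_mem hr (by omega))]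
  · rw [h₃]; rfl
  · rw [show j = (segmentWord m r q).length + 3 by omega]; rfl

theorem chargesOn_layout_eq {q : ℕ} (hr : r < 5) (hq : q ≤ m) :
    chargesOn g (20 * q) (segmentWord m r q).length =
      chargesOn (segmentPattern (g (20 * q)) (segmentWord m r q) (segmentSigns ε q)
        (g (20 * q + (segmentWord m r q).length + 1))
        (g (20 * q + (segmentWord m r q).length + 2))) 1 (segmentWord m r q).length :=
  chargesOn_congr fun _ hj => positionSign_eq_segmentPattern ε hr hq hj

theorem chargesOn_block_add_le {q : ℕ} (hr : r < 5) (hq : q < m) :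
    chargesOn g (20 * q) 20 + (if q = 0 then 1 else 0) + (if q + 1 = m ∧ r = 0 then 1 else 0) ≤
      13 := by
  have hw : segmentWord m r q = blockWord := if_pos hq
  have h := chargesOn_layout_eq ε hr hq.le
  rw [hw, show blockWord.length = 20 from rfl] at h
  rw [h]
  refine le_trans (add_le_add (add_le_add le_rfl ?_) ?_)
    (chargesOn_segmentPattern_blockWord_le (ε (5 * q + 1)) (ε (5 * q + 2)) (ε (5 * q + 3))
      (ε (5 * q + 4)) (ε (5 * q + 5)) (g (20 * q)) (g (20 * q + 20 + 1)) (g (20 * q + 20 + 2)))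
  · exact ite_one_zero_mono fun _ => positionSign_of_lt_one ε (by omega)
  · exact ite_one_zero_mono fun _ =>
      ⟨positionSign_of_gt ε (by omega), positionSign_of_gt ε (by omega)⟩

theorem chargesOn_tail_add_le (hr : r < 5) (hr₁ : 1 ≤ r) :
    chargesOn g (20 * m) (4 * r) + (if m = 0 then 1 else 0) ≤ tailCharges r := by
  have hw : segmentWord m r m = tailWord r := if_neg (lt_irrefl m)
  have h := chargesOn_layout_eq (m := m) (q := m) ε hr le_rfl
  rw [hw, (isCompanionWord_tailWord hr).length_eq,
    positionSign_of_gt ε (x := 20 * m + 4 * r + 1) (by omega),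
    positionSign_of_gt ε (x := 20 * m + 4 * r + 2) (by omega)] at h
  rw [h]
  refine le_trans (add_le_add le_rfl ?_) (chargesOn_segmentPattern_tailWord_le r
    (mem_Icc.2 ⟨hr₁, by omega⟩) (ε (5 * m + 1)) (ε (5 * m + 2)) (ε (5 * m + 3)) (ε (5 * m + 4))
    (ε (5 * m + 5)) (g (20 * m)))
  exact ite_one_zero_mono fun _ => positionSign_of_lt_one ε (by omega)

theorem chargesOn_layout_le (hr : r < 5) (hmr : 3 ≤ 5 * m + r) :
    chargesOn g 0 (20 * m + 4 * r) + 1 + (if r = 0 then 1 else 0) ≤ 13 * m + tailCharges r := by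
  have hlast : ∑ q ∈ range m, (if q + 1 = m ∧ r = 0 then 1 else 0) =
      ∑ q ∈ range m, if q = m - 1 then (if r = 0 then 1 else 0) else 0 :=
    sum_congr rfl fun q hq => by have := mem_range.1 hq; split_ifs <;> omega
  have hblocks := sum_le_sum (s := range m) fun q hq =>
    chargesOn_block_add_le (m := m) ε hr (mem_range.1 hq)
  simp only [sum_add_distrib, hlast, sum_ite_eq', mem_range, sum_const, card_range,
    smul_eq_mul] at hblocks
  rw [chargesOn_add, zero_add, chargesOn_twenty_mul]
  rcases Nat.eq_zero_or_pos r with rfl | hr₁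
  · have hm : 0 < m := by omega
    simp only [if_pos hm, if_pos (Nat.sub_lt hm one_pos), if_true] at hblocks
    rw [show ∀ h a, chargesOn h a (4 * 0) = 0 from fun _ _ => rfl, if_pos rfl,
      show tailCharges 0 = 0 from rfl]
    omega
  · have htail := chargesOn_tail_add_le (m := m) ε hr hr₁
    split_ifs at hblocks htail ⊢ <;> omega

end Layout

/-- Let `t + 1 ≥ 3`, `v = 4(t+1)`, `m = ⌊(t+1)/5⌋`, `m' = v − 20m`. Then there is a
balanced companion family on `{1,…,v}` whose worst-case total set discrepancy under
magnitude-2 swaps is at most `26m + Δ`, where `Δ = −4, 4, 8, 12, 18` according as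
`m' = 0, 4, 8, 12, 16`. -/
theorem concatenated_family_discrepancy_p2 (t : ℕ) (ht : 3 ≤ t + 1) (Δ : ℤ)
    (hΔ : (4*(t+1) - 20*((t+1)/5) = 0 ∧ Δ = -4) ∨
          (4*(t+1) - 20*((t+1)/5) = 4 ∧ Δ = 4) ∨
          (4*(t+1) - 20*((t+1)/5) = 8 ∧ Δ = 8) ∨
          (4*(t+1) - 20*((t+1)/5) = 12 ∧ Δ = 12) ∨
          (4*(t+1) - 20*((t+1)/5) = 16 ∧ Δ = 18)) :
    ∃ S : ℕ → Finset ℕ, IsBalancedCompanionFamily t S ∧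
      ∀ π : ℕ → ℕ, IsSwapCollection (4*(t+1)) 2 π →
        totalSetDiscrepancy t S π ≤ 26 * (((t+1)/5 : ℕ) : ℤ) + Δ := by
  obtain ⟨m, r, hr, htmr, hm⟩ : ∃ m r, r < 5 ∧ t + 1 = 5 * m + r ∧ (t + 1) / 5 = m :=
    ⟨_, _, Nat.mod_lt _ (by norm_num), (Nat.div_add_mod _ _).symm, rfl⟩
  have hv : 4 * (t + 1) = 20 * m + 4 * r := by omega
  have hlabels : 2 * t + 2 = 10 * m + 2 * r := by omega
  have hlab : ∀ x ∈ Icc 1 (4 * (t + 1)), layoutLabel m r x ∈ Icc 1 (2 * t + 2) := by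
    rw [hv, hlabels]; exact fun x => layoutLabel_mem hr
  have hsum : ∀ i ∈ Icc 1 (t + 1), ∑ x ∈ labelClass (4 * (t + 1)) (layoutLabel m r) (2 * i - 1), x =
      ∑ x ∈ labelClass (4 * (t + 1)) (layoutLabel m r) (2 * i), x := by
    rw [hv, htmr]; exact fun i => sum_labelClass_layout hr
  refine ⟨_, isBalancedCompanionFamily_labelClass hlab
    (by rw [hv, hlabels]; exact fun k => card_labelClass_layout hr) hsum, fun π hπ => ?_⟩
  obtain ⟨ε, hε⟩ := exists_totalSetDiscrepancy_labelClass_eq hlab hsum π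
  rw [hε, hm]
  rw [hv] at hπ ⊢
  have hgain := sum_sign_mul_displacement_le (fun x => positionSign_ne_zero (layoutLabel m r) ε) hπ
  have hcount := chargesOn_layout_le (m := m) ε hr (by omega)
  rw [chargesOn_zero_left] at hcount
  have hΔr : 2 * (tailCharges r : ℤ) - 2 - 2 * ((if r = 0 then 1 else 0 : ℕ) : ℤ) = Δ := by
    rw [hm] at hΔ
    interval_cases r <;> simp [tailCharges] <;> omega
  omega
end
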